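/- arXiv:2401.16095 — 2 statements merged into one kernel-verified Lean document; each statement's English description precedes it below -/
import Mathlib

section
/- For every ℓ ≥ 1, the language C_ℓ is disjoint from the Dyck language D_2: C_ℓ ∩ D_2 = ∅. -/
set_option linter.unusedVariables false

/-! ### Alphabet, effects, Dyck languages -/

abbrev Sig (n : ℕ) := Fin n × Bool

def letterEff {n : ℕ} (a : Sig n) : Fin n → ℤ :=
  fun j => if j = a.1 then (if a.2 then 1 else -1) else 0

def wordEff {n : ℕ} (w : List (Sig n)) : Fin n → ℤ :=
  (w.map letterEff).sum

/-- The Dyck language `D_n`. -/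
def Dyck (n : ℕ) : Language (Sig n) :=
  {w | wordEff w = 0 ∧ ∀ u, u <+: w → ∀ j, 0 ≤ wordEff u j}

/-- The coverability Dyck language `D_n^↑`. -/
def CovDyck (n : ℕ) : Language (Sig n) :=
  {w | ∀ u, u <+: w → ∀ j, 0 ≤ wordEff u j}

/-- The `ℤ`-Dyck language `D_n^ℤ`. -/
def ZDyck (n : ℕ) : Language (Sig n) :=
  {w | wordEff w = 0}

/-! ### VASS -/

structure VASS (A : Type) where
  Q : Type
  C : Type
  finQ : Finite Q
  finC : Finite C
  E : Set (Q × Option A × (C → ℤ) × Q)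
  finE : E.Finite

inductive VASS.NRun {A : Type} (V : VASS A) :
    (V.Q × (V.C → ℕ)) → List A → (V.Q × (V.C → ℕ)) → Prop
  | refl (cfg : V.Q × (V.C → ℕ)) : VASS.NRun V cfg [] cfg
  | step {q : V.Q} {c : V.C → ℕ} {a : Option A} {d : V.C → ℤ} {q' : V.Q}
      {c' : V.C → ℕ} {w : List A} {last : V.Q × (V.C → ℕ)} :
      (q, a, d, q') ∈ V.E →
      (∀ j, (c' j : ℤ) = (c j : ℤ) + d j) →
      VASS.NRun V (q', c') w last →
      VASS.NRun V (q, c) (a.toList ++ w) last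

/-- An initialized VASS: generalized initial/final configurations,
with `none` playing the role of `ω`. -/
structure InitVASS (A : Type) extends VASS A where
  qin : Q
  qout : Q
  cin : C → Option ℕ
  cout : C → Option ℕ

/-- The reachability language of an initialized VASS. -/
def InitVASS.lang {A : Type} (V : InitVASS A) : Language A :=
  {w | ∃ c0 cl : V.C → ℕ,
      V.toVASS.NRun (V.qin, c0) w (V.qout, cl) ∧
      (∀ j m, V.cin j = some m → c0 j = m) ∧
      (∀ j m, V.cout j = some m → cl j = m)}

/-! ### Transducers -/

structure Transducer (G A : Type) where
  Q : Type
  finQ : Finite Q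
  start : Q
  accept : Set Q
  trans : Set (Q × (Option G × Option A) × Q)
  finT : trans.Finite

inductive Transducer.Path {G A : Type} (T : Transducer G A) :
    T.Q → List G → List A → T.Q → Prop
  | refl (q : T.Q) : Transducer.Path T q [] [] q
  | step {q q' qf : T.Q} {g : Option G} {a : Option A} {u : List G} {v : List A} :
      (q, (g, a), q') ∈ T.trans →
      Transducer.Path T q' u v qf →
      Transducer.Path T q (g.toList ++ u) (a.toList ++ v) qf

/-- The relation recognized by a transducer. -/
def Transducer.rel {G A : Type} (T : Transducer G A) (u : List G) (v : List A) : Prop :=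
  ∃ qf ∈ T.accept, T.Path T.start u v qf

/-- `T⁻¹(L)`. -/
def Transducer.invImage {G A : Type} (T : Transducer G A) (L : Language A) : Language G :=
  {u | ∃ v ∈ L, T.rel u v}

/-! ### Regular separability -/

def RegSep {A : Type} (L1 L2 : Language A) : Prop :=
  ∃ R : Language A, R.IsRegular ∧ L1 ≤ R ∧ ∀ w ∈ R, w ∉ L2

/-! ### Linear sets and regular approximations -/

structure LinSet (n : ℕ) where
  base : Fin n → ℤ
  periods : Set (Fin n → ℤ)
  finP : periods.Finite

def LinSet.toSet {n : ℕ} (L : LinSet n) : Set (Fin n → ℤ) :=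
  {x | ∃ p ∈ AddSubmonoid.closure L.periods, x = L.base + p}

def inBox {n : ℕ} (k : ℕ) (x : Fin n → ℤ) : Prop :=
  ∀ j, -(k : ℤ) ≤ x j ∧ x j ≤ (k : ℤ)

/-- Reachability in the ε-NFA underlying the `k`-th regular approximation of `L`:
states are vectors in `[-k,k]^n`, letters move by their effect, ε-transitions
subtract a period. -/
inductive KReach {n : ℕ} (L : LinSet n) (k : ℕ) :
    (Fin n → ℤ) → List (Sig n) → (Fin n → ℤ) → Prop
  | refl (x : Fin n → ℤ) (h : inBox k x) : KReach L k x [] x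
  | letter {x y : Fin n → ℤ} {w : List (Sig n)} (a : Sig n)
      (h : inBox k x) (h' : inBox k (x + letterEff a)) :
      KReach L k (x + letterEff a) w y → KReach L k x (a :: w) y
  | eps {x y : Fin n → ℤ} {w : List (Sig n)} {p : Fin n → ℤ}
      (hp : p ∈ L.periods) (h : inBox k x) (h' : inBox k (x - p)) :
      KReach L k (x - p) w y → KReach L k x w y

/-- The `k`-th regular approximation `K^k(L)`. -/
def KApprox {n : ℕ} (L : LinSet n) (k : ℕ) : Language (Sig n) :=
  {w | ∃ y, KReach L k 0 w y ∧ y ∈ L.toSet}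

/-! ### The `⊕⁺` operation and the families `R_ℓ` -/

def posPlus {n : ℕ} (K L : Set (Fin n → ℤ)) : Set (Fin n → ℤ) :=
  {x | (∀ j, 0 ≤ x j) ∧ ∃ a ∈ K, (∀ j, 0 ≤ a j) ∧ ∃ b ∈ L, x = a + b}

def posFoldAux {n : ℕ} : Set (Fin n → ℤ) → List (Set (Fin n → ℤ)) → Set (Fin n → ℤ)
  | S, [] => S
  | S, L :: Ls => posFoldAux (posPlus S L) Ls

/-- `posFold [L₁, …, L_ℓ] = L₁ ⊕⁺ ⋯ ⊕⁺ L_ℓ` (associated to the left); for `ℓ = 1`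
it is `L₁` itself. -/
def posFold {n : ℕ} : List (Set (Fin n → ℤ)) → Set (Fin n → ℤ)
  | [] => ∅
  | L :: Ls => posFoldAux L Ls

/-- The family `R_ℓ`. -/
def RFam (n ℓ : ℕ) : Set (Language (Sig n)) :=
  {K | ∃ (k : ℕ) (Ls : List (LinSet n)), Ls.length = ℓ ∧
      (0 : Fin n → ℤ) ∉ posFold (Ls.map LinSet.toSet) ∧
      K = (Ls.map (fun L => KApprox L k)).prod}

/-- `R_{≤ m} = ⋃_{1 ≤ i ≤ m} R_i`. -/
def RleFam (n m : ℕ) : Set (Language (Sig n)) :=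
  ⋃ i ∈ Set.Icc 1 m, RFam n i

/-- `R = ⋃_{ℓ ≥ 1} R_ℓ`. -/
def RAll (n : ℕ) : Set (Language (Sig n)) :=
  ⋃ i ∈ Set.Ici 1, RFam n i

/-! ### Basic separator sets -/

def IsBasicSepSet {n : ℕ} (S : Language (Sig n)) (B : Set (Language (Sig n))) : Prop :=
  (∀ K ∈ B, K.IsRegular ∧ ∀ w ∈ K, w ∉ S) ∧
  (∀ L : Language (Sig n), L.IsRegular → (∀ w ∈ L, w ∉ S) →
    ∃ F ⊆ B, F.Finite ∧ ∀ w ∈ L, ∃ K ∈ F, w ∈ K)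

/-! Extra defs for specific statements -/

/-- `u ∼_A v`: the words induce the same state transformation in the DFA `M`. -/
def simEq {α σ : Type} (M : DFA α σ) (u v : List α) : Prop :=
  ∀ p : σ, M.evalFrom p u = M.evalFrom p v

/-- Assemble `w₀ m₁ w₁ ⋯ m_k w_k` over `Σ ⊎ Σ#` (`Sum.inl` = plain, `Sum.inr` = marked). -/
def assemble {α : Type} : List (List α) → List α → List (α ⊕ α)
  | [], _ => []
  | w :: _, [] => w.map Sum.inl
  | w :: ws, m :: ms => w.map Sum.inl ++ Sum.inr m :: assemble ws ms

/-- The set of effects of a language. -/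
def effSet {n : ℕ} (L : Language (Sig n)) : Set (Fin n → ℤ) :=
  {v | ∃ w ∈ L, wordEff w = v}

/-- `Mod(μ, v)`. -/
def ModLang (n μ : ℕ) (v : Fin n → ℤ) : Language (Sig n) :=
  {w | ∀ j, wordEff w j ≡ v j [ZMOD (μ : ℤ)]}

/-- `ModSet(μ, v)`: base `v`, periods `{±μ·e_i}`. -/
def ModSet (n μ : ℕ) (v : Fin n → ℤ) : LinSet n where
  base := v
  periods := (Set.range fun i : Fin n => (μ : ℤ) • Pi.single i (1 : ℤ)) ∪
    (Set.range fun i : Fin n => -((μ : ℤ) • Pi.single i (1 : ℤ)))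
  finP := (Set.finite_range _).union (Set.finite_range _)

/-- `Cov(k, i)`. -/
def CovLang (n k : ℕ) (i : Fin n) : Language (Sig n) :=
  {x | ∃ w w', x = w ++ w' ∧ wordEff w i < 0 ∧
      ∀ u, u <+: w → u ≠ w → 0 ≤ wordEff u i ∧ wordEff u i ≤ (k : ℤ)}

/-- `L_{neg,i}`: base `-e_i`, periods `{±e_j : j ≠ i}`. -/
def LNeg (n : ℕ) (i : Fin n) : LinSet n where
  base := -Pi.single i 1
  periods := ((fun j : Fin n => Pi.single j (1 : ℤ)) '' {j | j ≠ i}) ∪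
    ((fun j : Fin n => -Pi.single j (1 : ℤ)) '' {j | j ≠ i})
  finP := ((Set.toFinite _).image _).union ((Set.toFinite _).image _)

/-- `Z`: base `0`, periods `{±e_j}`. -/
def ZSet (n : ℕ) : LinSet n where
  base := 0
  periods := (Set.range fun j : Fin n => Pi.single j (1 : ℤ)) ∪
    (Set.range fun j : Fin n => -Pi.single j (1 : ℤ))
  finP := (Set.finite_range _).union (Set.finite_range _)

/-! The language `C_ℓ` over `Σ₂` -/

def ltrA1 : Sig 2 := (0, true)
def ltrA2 : Sig 2 := (1, true)
def ltrB1 : Sig 2 := (0, false)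
def ltrB2 : Sig 2 := (1, false)

def fwdWord (j : ℕ) : List (Sig 2) := ltrA1 :: List.replicate j ltrA2
def bwdWord (j : ℕ) : List (Sig 2) := ltrB1 :: List.replicate j ltrB2

def segLang (j : ℕ) : Language (Sig 2) :=
  KStar.kstar ({fwdWord j, bwdWord j} : Language (Sig 2))

def aPlusLang : Language (Sig 2) :=
  {w | ∃ m : ℕ, 0 < m ∧ w = List.replicate m ltrA1}

def CLang (ℓ : ℕ) : Language (Sig 2) :=
  aPlusLang * ((List.range ℓ).map (fun j => segLang (j + 1))).prod


lemma wordEff_append {n : ℕ} (u v : List (Sig n)) :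
    wordEff (u ++ v) = wordEff u + wordEff v := by
  simp [wordEff]

lemma wordEff_fwd0 (j : ℕ) : wordEff (fwdWord j) 0 = 1 := by
  simp [fwdWord, wordEff, letterEff, ltrA1, ltrA2]

lemma wordEff_fwd1 (j : ℕ) : wordEff (fwdWord j) 1 = (j : ℤ) := by
  simp [fwdWord, wordEff, letterEff, ltrA1, ltrA2]

lemma wordEff_bwd0 (j : ℕ) : wordEff (bwdWord j) 0 = -1 := by
  simp [bwdWord, wordEff, letterEff, ltrB1, ltrB2]

lemma wordEff_bwd1 (j : ℕ) : wordEff (bwdWord j) 1 = -(j : ℤ) := by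
  simp [bwdWord, wordEff, letterEff, ltrB1, ltrB2]

lemma segInv (s : ℕ) (v : List (Sig 2)) (hv : v ∈ segLang s) :
    ∀ x y : ℤ, y < (s : ℤ) * x →
      y + wordEff v 1 < (s : ℤ) * (x + wordEff v 0) := by
  rw [segLang] at hv
  obtain ⟨L, rfl, hL⟩ := Language.mem_kstar.mp hv
  clear hv
  induction L with
  | nil => intro x y h; simpa [wordEff] using h
  | cons b L ih =>
    intro x y h
    have hb : b ∈ ({fwdWord s, bwdWord s} : Language (Sig 2)) := hL b (by simp)
    have hL' : ∀ u ∈ L, u ∈ ({fwdWord s, bwdWord s} : Language (Sig 2)) := by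
      intro u hu; exact hL u (by simp [hu])
    have key : ∀ ε : ℤ, (ε = 1 ∨ ε = -1) →
        wordEff b 0 = ε → wordEff b 1 = ε * s →
        y + wordEff (List.flatten (b :: L)) 1
          < (s : ℤ) * (x + wordEff (List.flatten (b :: L)) 0) := by
      intro ε hε h0 h1
      have := ih hL' (x + ε) (y + ε * s) (by rcases hε with h | h <;> subst h <;> nlinarith)
      have hj : List.flatten (b :: L) = b ++ List.flatten L := by simp
      rw [hj, wordEff_append]
      simp only [Pi.add_apply, h0, h1]
      linarith [this]
    rcases hb with hb | hb
    · exact key 1 (Or.inl rfl)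
        (by rw [hb, wordEff_fwd0]) (by rw [hb, wordEff_fwd1]; ring)
    · exact key (-1) (Or.inr rfl)
        (by rw [show b = bwdWord s from hb, wordEff_bwd0])
        (by rw [show b = bwdWord s from hb, wordEff_bwd1]; ring)

lemma mainInd : ∀ (t s : ℕ) (v : List (Sig 2)) (e : Fin 2 → ℤ),
    v ∈ ((List.range t).map (fun j => segLang (j + s))).prod →
    e 1 < (s : ℤ) * e 0 →
    (∀ u, u <+: v → ∀ i, 0 ≤ e i + wordEff u i) →
    ¬ (∀ i, e i + wordEff v i = 0) := by
  intro t
  induction t with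
  | zero =>
    intro s v e hv hinv hpre hzero
    simp only [List.range_zero, List.map_nil, List.prod_nil, Language.mem_one] at hv
    subst hv
    have h0 := hzero 0
    have h1 := hzero 1
    simp [wordEff] at h0 h1
    rw [h0, h1] at hinv
    simp at hinv
  | succ t ih =>
    intro s v e hv hinv hpre hzero
    rw [List.range_succ_eq_map, List.map_cons, List.prod_cons, List.map_map] at hv
    rw [Language.mem_mul] at hv
    obtain ⟨v1, hv1, v2, hv2, rfl⟩ := hv
    have hmapeq : ((fun j => segLang (j + s)) ∘ Nat.succ)
        = (fun j => segLang (j + (s + 1))) := by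
      funext j
      show segLang (Nat.succ j + s) = segLang (j + (s + 1))
      have h2 : Nat.succ j + s = j + (s + 1) := by omega
      rw [h2]
    rw [hmapeq] at hv2
    simp only [Nat.zero_add] at hv1
    set mid : Fin 2 → ℤ := fun i => e i + wordEff v1 i with hmid
    have hmid0 : 0 ≤ mid 0 := hpre v1 ⟨v2, rfl⟩ 0
    have hmid1 : mid 1 < (s : ℤ) * mid 0 := by
      have := segInv s v1 hv1 (e 0) (e 1) hinv
      simp only [hmid]; linarith
    have hinv' : mid 1 < ((s + 1 : ℕ) : ℤ) * mid 0 := by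
      push_cast; nlinarith
    refine ih (s + 1) v2 mid hv2 hinv' ?_ ?_
    · intro u hu i
      obtain ⟨tl, rfl⟩ := hu
      have : v1 ++ u <+: v1 ++ (u ++ tl) := ⟨tl, by simp⟩
      have := hpre (v1 ++ u) this i
      rw [wordEff_append] at this
      simp only [hmid, Pi.add_apply] at this ⊢
      linarith
    · intro i
      have := hzero i
      rw [wordEff_append] at this
      simp only [hmid, Pi.add_apply] at this ⊢
      linarith

theorem stmt16 (ℓ : ℕ) (hl : 1 ≤ ℓ) : ∀ w ∈ CLang ℓ, w ∉ Dyck 2 := by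
  intro w hw hD
  obtain ⟨hz, hpref⟩ := hD
  rw [CLang, Language.mem_mul] at hw
  obtain ⟨A, ⟨m, hm, rfl⟩, B, hB, rfl⟩ := hw
  set e : Fin 2 → ℤ := wordEff (List.replicate m ltrA1) with he
  have he0 : e 0 = (m : ℤ) := by simp [he, wordEff, letterEff, ltrA1]
  have he1 : e 1 = 0 := by simp [he, wordEff, letterEff, ltrA1]
  refine mainInd ℓ 1 B e (by simpa using hB) ?_ ?_ ?_
  · rw [he0, he1]; push_cast; simp; exact_mod_cast hm
  · intro u hu i
    obtain ⟨tl, rfl⟩ := hu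
    have hp : List.replicate m ltrA1 ++ u <+: List.replicate m ltrA1 ++ (u ++ tl) :=
      ⟨tl, by simp⟩
    have := hpref _ hp i
    rw [wordEff_append] at this
    simpa [he] using this
  · intro i
    have := congrFun hz i
    rw [wordEff_append] at this
    simpa [he] using this
end

section
/- There exist an alphabet Σ and initialized VASS V' and V'' over Σ such that L(V') ∩ L(V'') = ∅ and yet L(V') and L(V'') are not regularly separable, i.e., no regular language R satisfies L(V') ⊆ R and R ∩ L(V'') = ∅. -/
set_option linter.unusedVariables false

/-! `{aⁿbⁿ}` and `{aⁿbᵐ : n < m}` are reachability languages of one-counter VASS, kept apart by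
the balance `#a - #b`, which is nonnegative on the first and negative on the second (a potential
argument along runs). A regular separator `R` would have pairwise distinct left quotients by the
words `aⁿ`: `bⁿ` lies in the quotient by `aⁿ` but not in the quotient by `aᵐ` for `m < n`,
contradicting Myhill–Nerode. -/

theorem not_regSep_of_forall_lt {A : Type} {L₁ L₂ : Language A} (u v : ℕ → List A)
    (h₁ : ∀ n, u n ++ v n ∈ L₁) (h₂ : ∀ m n, m < n → u m ++ v n ∈ L₂) :
    ¬ RegSep L₁ L₂ := by
  rintro ⟨R, hR, hL₁R, hRL₂⟩
  obtain ⟨m, n, hmn, hquot⟩ := hR.finite_range_leftQuotient.exists_lt_map_eq_of_forall_mem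
    (f := fun n => R.leftQuotient (u n)) fun n => Set.mem_range_self (u n)
  have hvn : v n ∈ R.leftQuotient (u m) := hquot ▸ hL₁R (h₁ n)
  exact hRL₂ _ hvn (h₂ m n hmn)

namespace VASS.NRun

variable {A : Type} {V : VASS A}

theorem append {s t r : V.Q × (V.C → ℕ)} {u v : List A} (h₁ : V.NRun s u t)
    (h₂ : V.NRun t v r) : V.NRun s (u ++ v) r := by
  induction h₁ with
  | refl => exact h₂
  | step hE hc _ ih => rw [List.append_assoc]; exact step hE hc (ih h₂)

theorem single {q q' : V.Q} {a : Option A} {d : V.C → ℤ} {c c' : V.C → ℕ}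
    (hE : (q, a, d, q') ∈ V.E) (hc : ∀ j, (c' j : ℤ) = c j + d j) :
    V.NRun (q, c) a.toList (q', c') := by
  simpa using step hE hc (refl (q', c'))

theorem replicate {q : V.Q} {a : A} {d : V.C → ℤ} (hE : (q, some a, d, q) ∈ V.E) (n : ℕ)
    {c : ℕ → V.C → ℕ} (hc : ∀ i < n, ∀ j, (c (i + 1) j : ℤ) = c i j + d j) :
    V.NRun (q, c 0) (List.replicate n a) (q, c n) := by
  induction n generalizing c with
  | zero => exact refl _
  | succ n ih =>
    rw [List.replicate_succ]
    exact step hE (hc 0 n.succ_pos)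
      (ih (c := fun i => c (i + 1)) fun i hi => hc (i + 1) (by omega))

theorem potential_add_sum_le (Φ : V.Q × (V.C → ℕ) → ℤ) (f : A → ℤ)
    (hΦ : ∀ q a d q' c c', (q, a, d, q') ∈ V.E → (∀ j, (c' j : ℤ) = c j + d j) →
      Φ (q, c) + (a.toList.map f).sum ≤ Φ (q', c'))
    {s t : V.Q × (V.C → ℕ)} {w : List A} (h : V.NRun s w t) :
    Φ s + (w.map f).sum ≤ Φ t := by
  induction h with
  | refl => simp
  | step hE hc _ ih =>
    have := hΦ _ _ _ _ _ _ hE hc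
    simp only [List.map_append, List.sum_append]
    linarith

end VASS.NRun

/-- `true` plays the letter `a` and `false` the letter `b`, so a word has weight `#a - #b`. -/
def balance (x : Bool) : ℤ := if x then 1 else -1

abbrev anbnVASS : InitVASS Bool where
  Q := Fin 2
  C := Unit
  finQ := inferInstance
  finC := inferInstance
  E := {(0, some true, fun _ => 1, 0), (0, none, fun _ => 0, 1), (1, some false, fun _ => -1, 1)}
  finE := (Set.toFinite _).insert _ |>.insert _
  qin := 0
  qout := 1
  cin := fun _ => some 0
  cout := fun _ => some 0

abbrev anbmLtVASS : InitVASS Bool where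
  Q := Fin 2
  C := Unit
  finQ := inferInstance
  finC := inferInstance
  E := {(0, some true, fun _ => 1, 0), (0, some false, fun _ => 0, 1),
    (1, some false, fun _ => -1, 1), (1, some false, fun _ => 0, 1)}
  finE := (Set.toFinite _).insert _ |>.insert _ |>.insert _
  qin := 0
  qout := 1
  cin := fun _ => some 0
  cout := fun _ => some 0

theorem replicate_append_replicate_mem_anbnVASS (n : ℕ) :
    List.replicate n true ++ List.replicate n false ∈ anbnVASS.lang := by
  refine ⟨fun _ => 0, fun _ => 0, ?_, fun _ _ h => Option.some_inj.mp h,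
    fun _ _ h => Option.some_inj.mp h⟩
  have hup : anbnVASS.NRun (0, fun _ => 0) (List.replicate n true) (0, fun _ => n) :=
    VASS.NRun.replicate (d := fun _ => 1) (by simp) n (c := fun i _ => i) (by simp)
  have hswitch : anbnVASS.NRun (0, fun _ => n) [] (1, fun _ => n) :=
    VASS.NRun.single (a := none) (d := fun _ => 0) (by simp) (by simp)
  have hdown : anbnVASS.NRun (1, fun _ => n) (List.replicate n false) (1, fun _ => 0) := by
    simpa using VASS.NRun.replicate (d := fun _ => -1) (by simp) n (c := fun i _ => n - i)
      (by intro i hi j; push_cast [Nat.sub_add_comm, hi]; omega)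
  exact hup.append (hswitch.append hdown)

theorem replicate_append_replicate_mem_anbmLtVASS {n m : ℕ} (hnm : n < m) :
    List.replicate n true ++ List.replicate m false ∈ anbmLtVASS.lang := by
  refine ⟨fun _ => 0, fun _ => 0, ?_, fun _ _ h => Option.some_inj.mp h,
    fun _ _ h => Option.some_inj.mp h⟩
  obtain ⟨k, rfl⟩ : ∃ k, m = 1 + n + k := ⟨m - n - 1, by omega⟩
  have hup : anbmLtVASS.NRun (0, fun _ => 0) (List.replicate n true) (0, fun _ => n) :=
    VASS.NRun.replicate (d := fun _ => 1) (by simp) n (c := fun i _ => i) (by simp)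
  have hswitch : anbmLtVASS.NRun (0, fun _ => n) [false] (1, fun _ => n) :=
    VASS.NRun.single (a := some false) (d := fun _ => 0) (by simp) (by simp)
  have hdown : anbmLtVASS.NRun (1, fun _ => n) (List.replicate n false) (1, fun _ => 0) := by
    simpa using VASS.NRun.replicate (d := fun _ => -1) (by simp) n (c := fun i _ => n - i)
      (by intro i hi j; push_cast [Nat.sub_add_comm, hi]; omega)
  have hidle : anbmLtVASS.NRun (1, fun _ => 0) (List.replicate k false) (1, fun _ => 0) :=
    VASS.NRun.replicate (d := fun _ => 0) (by simp) k (c := fun _ _ => 0) (by simp)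
  rw [List.replicate_add, List.replicate_add]
  simpa using hup.append (hswitch.append (hdown.append hidle))

theorem sum_map_balance_nonneg_of_mem_anbnVASS {w : List Bool} (hw : w ∈ anbnVASS.lang) :
    0 ≤ (w.map balance).sum := by
  obtain ⟨c₀, c₁, hrun, hc₀, hc₁⟩ := hw
  have := hrun.potential_add_sum_le (fun qc => -(qc.2 () : ℤ)) (fun x => -balance x) <| by
    simp only [anbnVASS, Set.mem_insert_iff, Set.mem_singleton_iff, Prod.mk.injEq]
    rintro q a d q' c c' (⟨-, rfl, rfl, -⟩ | ⟨-, rfl, rfl, -⟩ | ⟨-, rfl, rfl, -⟩) hc <;>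
      simp [balance, hc ()]
  have hneg : (w.map fun x => -balance x).sum = -(w.map balance).sum := by
    simp [List.sum_neg, Function.comp_def]
  simp only [hneg, hc₀ () 0 rfl, hc₁ () 0 rfl] at this
  linarith

theorem sum_map_balance_neg_of_mem_anbmLtVASS {w : List Bool} (hw : w ∈ anbmLtVASS.lang) :
    (w.map balance).sum < 0 := by
  obtain ⟨c₀, c₁, hrun, hc₀, hc₁⟩ := hw
  -- The first `b` moves to state `1` without decrementing; the potential pays for it there.
  have := hrun.potential_add_sum_le (fun qc => qc.2 () - (qc.1 : Fin 2).val) balance <| by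
    simp only [anbmLtVASS, Set.mem_insert_iff, Set.mem_singleton_iff, Prod.mk.injEq]
    rintro q a d q' c c' (⟨rfl, rfl, rfl, rfl⟩ | ⟨rfl, rfl, rfl, rfl⟩ | ⟨rfl, rfl, rfl, rfl⟩ |
      ⟨rfl, rfl, rfl, rfl⟩) hc <;> simp [balance, hc ()]
  simp [hc₀ () 0 rfl, hc₁ () 0 rfl] at this
  linarith

theorem stmt19 : ∃ (A : Type) (_ : Finite A) (V1 V2 : InitVASS A),
    (∀ w ∈ V1.lang, w ∉ V2.lang) ∧ ¬ RegSep V1.lang V2.lang := by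
  refine ⟨Bool, inferInstance, anbnVASS, anbmLtVASS, fun w h₁ h₂ => ?_, ?_⟩
  · exact (sum_map_balance_neg_of_mem_anbmLtVASS h₂).not_ge
      (sum_map_balance_nonneg_of_mem_anbnVASS h₁)
  · exact not_regSep_of_forall_lt (fun n => List.replicate n true)
      (fun n => List.replicate n false) replicate_append_replicate_mem_anbnVASS
      fun _ _ => replicate_append_replicate_mem_anbmLtVASS
end
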